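/- Let q = sum over l in [N] of q_l * z_l^2 where z_1, ..., z_N are i.i.d. standard normal random variables and the real coefficients satisfy |q_l| ≤ λ_max for all l. Then for every ν with 0 < ν < 1/2, P(q - E[q] ≥ N ν) ≤ exp(- N ν^2 / (8 max{λ_max^2, 1})). -/

import Mathlib

/-!
Chernoff's method. For `Z` standard normal, `E exp (s (Z² - 1)) = exp (-s) / √(1 - 2s)`, and for
`s ≤ 1/4` this is at most `exp (2 s²)`; by independence the moment generating function of
`∑ q_l (z_l² - 1)` at `t` is therefore at most `exp (2 t² ∑ q_l²) ≤ exp (2 t² N M)` with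
`M = max {λmax², 1}`, as long as `q_l t ≤ 1/4`. Markov's inequality with `t = ν / (4M)`, which is
admissible because `q_l ≤ M` and `ν < 1/2`, gives the bound `exp (-N ν² / (8M))`.
-/

open MeasureTheory ProbabilityTheory Real

lemma one_le_one_sub_mul_exp_add_sq {u : ℝ} (hu : u ≤ 1 / 2) :
    1 ≤ (1 - u) * exp (u + u ^ 2) := by
  rcases le_total u 0 with hu₀ | hu₀
  · -- `(1 - u) (1 + u + u²) = 1 - u³`
    nlinarith [add_one_le_exp (u + u ^ 2), pow_two_nonneg u]
  · nlinarith [quadratic_le_exp_of_nonneg (by positivity : 0 ≤ u + u ^ 2), mul_nonneg hu₀ hu₀,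
      mul_nonneg (mul_nonneg hu₀ hu₀) hu₀]

lemma exp_neg_mul_inv_sqrt_one_sub_two_mul_le {s : ℝ} (hs : s ≤ 1 / 4) :
    exp (-s) * (√(1 - 2 * s))⁻¹ ≤ exp (2 * s ^ 2) := by
  have hpos : 0 < 1 - 2 * s := by linarith
  rw [← pow_le_pow_iff_left₀ (by positivity) (by positivity) two_ne_zero, mul_pow, inv_pow,
    sq_sqrt hpos.le, ← exp_nat_mul, ← exp_nat_mul, ← div_eq_mul_inv, div_le_iff₀ hpos]
  have := one_le_one_sub_mul_exp_add_sq (u := 2 * s) (by linarith)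
  calc exp (2 * -s) = exp (2 * -s) * 1 := (mul_one _).symm
    _ ≤ exp (2 * -s) * ((1 - 2 * s) * exp (2 * s + (2 * s) ^ 2)) := by gcongr
    _ = exp (2 * (2 * s ^ 2)) * (1 - 2 * s) := by rw [mul_left_comm, ← exp_add]; ring_nf

lemma mgf_sq_gaussianReal (s : ℝ) :
    mgf (fun x ↦ x ^ 2) (gaussianReal 0 1) s = (√(1 - 2 * s))⁻¹ := by
  have hpdf (x : ℝ) : gaussianPDFReal 0 1 x • exp (s * x ^ 2)
      = (√(2 * π))⁻¹ * exp (-(1 / 2 - s) * x ^ 2) := by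
    rw [gaussianPDFReal, smul_eq_mul, mul_assoc, ← exp_add]
    push_cast
    ring_nf
  rw [mgf, integral_gaussianReal_eq_integral_smul one_ne_zero]
  simp_rw [hpdf]
  rw [integral_const_mul, integral_gaussian, ← sqrt_inv, ← sqrt_mul (by positivity), ← sqrt_inv]
  congr 1
  field_simp

lemma mgf_mul_sq_sub_one_of_map_eq_gaussianReal {Ω : Type*} [MeasurableSpace Ω] {P : Measure Ω}
    {Z : Ω → ℝ} (hZ : P.map Z = gaussianReal 0 1) (c t : ℝ) :
    mgf (fun ω ↦ c * (Z ω ^ 2 - 1)) P t = exp (-(c * t)) * (√(1 - 2 * (c * t)))⁻¹ := by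
  have hZm : AEMeasurable Z P := aemeasurable_of_map_neZero (by rw [hZ]; infer_instance)
  rw [← Function.comp_def (fun x ↦ c * (x ^ 2 - 1)) Z, ← mgf_map hZm (by fun_prop), hZ]
  simp_rw [mul_sub, mul_one, sub_eq_neg_add]
  rw [mgf_const_add, mgf_const_mul, mgf_sq_gaussianReal]
  ring_nf

lemma measureReal_sum_ge_le_of_mgf_le {Ω ι : Type*} [MeasurableSpace Ω] {P : Measure Ω}
    {X : ι → Ω → ℝ} {s : Finset ι} (h_indep : iIndepFun X P) (h_meas : ∀ i, AEMeasurable (X i) P)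
    {t : ℝ} (ht : 0 ≤ t) {b : ι → ℝ} (h_mgf : ∀ i ∈ s, mgf (X i) P t ≤ exp (b i))
    (h_pos : ∀ i ∈ s, 0 < mgf (X i) P t) (ε : ℝ) :
    P.real {ω | ε ≤ (∑ i ∈ s, X i) ω} ≤ exp (-t * ε + ∑ i ∈ s, b i) := by
  have := h_indep.isProbabilityMeasure
  have h_mgf_sum := h_indep.mgf_sum₀ h_meas s (t := t)
  have h_int : Integrable (fun ω ↦ exp (t * (∑ i ∈ s, X i) ω)) P := by
    rw [← mgf_pos_iff, h_mgf_sum]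
    exact Finset.prod_pos h_pos
  calc P.real {ω | ε ≤ (∑ i ∈ s, X i) ω}
      ≤ exp (-t * ε) * ∏ i ∈ s, mgf (X i) P t := h_mgf_sum ▸ measure_ge_le_exp_mul_mgf ε ht h_int
    _ ≤ exp (-t * ε) * ∏ i ∈ s, exp (b i) := by
      gcongr with i hi
      · exact fun i _ ↦ mgf_nonneg
      · exact h_mgf i hi
    _ = exp (-t * ε + ∑ i ∈ s, b i) := by rw [exp_add, exp_sum]

lemma measureReal_sum_mul_sq_sub_one_ge_le {Ω ι : Type*} [MeasurableSpace Ω] {P : Measure Ω}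
    [Fintype ι] {z : ι → Ω → ℝ} (h_indep : iIndepFun z P)
    (h_gauss : ∀ i, P.map (z i) = gaussianReal 0 1) (c : ι → ℝ) {t : ℝ} (ht : 0 ≤ t)
    (hct : ∀ i, c i * t ≤ 1 / 4) (ε : ℝ) :
    P.real {ω | ε ≤ ∑ i, c i * (z i ω ^ 2 - 1)} ≤ exp (-t * ε + 2 * t ^ 2 * ∑ i, c i ^ 2) := by
  have h_mgf (i) := mgf_mul_sq_sub_one_of_map_eq_gaussianReal (h_gauss i) (c i) t
  have h_meas (i) : AEMeasurable (z i) P :=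
    aemeasurable_of_map_neZero (by rw [h_gauss i]; infer_instance)
  have h := measureReal_sum_ge_le_of_mgf_le (s := .univ) (t := t)
    (h_indep.comp (fun i x ↦ c i * (x ^ 2 - 1)) (fun _ ↦ by fun_prop))
    (fun i ↦ ((h_meas i).pow_const 2).sub_const 1 |>.const_mul (c i)) ht
    (fun i _ ↦ h_mgf i ▸ exp_neg_mul_inv_sqrt_one_sub_two_mul_le (hct i))
    (fun i _ ↦ h_mgf i ▸ mul_pos (exp_pos _) (inv_pos.2 (sqrt_pos.2 (by linarith [hct i])))) ε
  simp only [Finset.sum_apply, Function.comp_apply] at h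
  convert h using 3
  rw [Finset.mul_sum]
  ring_nf

theorem stmt_2_general {Ω : Type*} [MeasurableSpace Ω] (P : Measure Ω) [IsProbabilityMeasure P]
    (N : ℕ) (z : Fin N → Ω → ℝ)
    (hindep : iIndepFun z P)
    (hgauss : ∀ l, Measure.map (z l) P = gaussianReal 0 1)
    (ql : Fin N → ℝ) (lammax : ℝ) (hql : ∀ l, |ql l| ≤ lammax)
    (ν : ℝ) (hν0 : 0 < ν) (hν : ν < 1/2) :
    P {ω | (∑ l, ql l * (z l ω) ^ 2) - (∑ l, ql l) ≥ (N : ℝ) * ν}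
      ≤ ENNReal.ofReal (Real.exp (-((N : ℝ) * ν ^ 2) / (8 * max (lammax ^ 2) 1))) := by
  set M := max (lammax ^ 2) 1
  have hM : 1 ≤ M := le_max_right _ _
  have hql_sq (l) : ql l ^ 2 ≤ M :=
    (sq_abs (ql l) ▸ pow_le_pow_left₀ (abs_nonneg _) (hql l) 2).trans (le_max_left _ _)
  -- the Chernoff parameter minimising `-t N ν + 2 t² N M`
  set t := ν / (4 * M)
  have ht : 0 ≤ t := by positivity
  have hql_t (l) : ql l * t ≤ 1 / 4 := by
    have : ql l ≤ M := by nlinarith [hql_sq l]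
    calc ql l * t ≤ M * t := by gcongr
      _ = ν / 4 := by simp only [t]; field_simp
      _ ≤ 1 / 4 := by linarith
  have hsum : ∑ l, ql l ^ 2 ≤ N * M := by
    simpa using Finset.sum_le_sum fun l (_ : l ∈ Finset.univ) ↦ hql_sq l
  have hexponent : -t * (N * ν) + 2 * t ^ 2 * ∑ l, ql l ^ 2 ≤ -(N * ν ^ 2) / (8 * M) :=
    calc -t * (N * ν) + 2 * t ^ 2 * ∑ l, ql l ^ 2 ≤ -t * (N * ν) + 2 * t ^ 2 * (N * M) := by
          gcongr
      _ = -(N * ν ^ 2) / (8 * M) := by simp only [t]; field_simp; ring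
  have hset : {ω | (∑ l, ql l * (z l ω) ^ 2) - (∑ l, ql l) ≥ (N : ℝ) * ν}
      = {ω | (N : ℝ) * ν ≤ ∑ l, ql l * (z l ω ^ 2 - 1)} := by
    simp only [mul_sub, mul_one, Finset.sum_sub_distrib, ge_iff_le]
  rw [hset, ← ofReal_measureReal]
  exact ENNReal.ofReal_le_ofReal <|
    (measureReal_sum_mul_sq_sub_one_ge_le hindep hgauss ql ht hql_t _).trans (exp_le_exp.2 hexponent)

/-- Large deviation bound for a diagonal Gaussian quadratic form
`q = ∑ l, q_l z_l²` with i.i.d. standard normal `z_l` and `|q_l| ≤ λmax`: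
for `0 < ν < 1/2`, `P(q - E q ≥ N ν) ≤ exp(-N ν² / (8 max{λmax², 1}))`. -/
theorem stmt_2 {Ω : Type*} [MeasurableSpace Ω] (P : Measure Ω) [IsProbabilityMeasure P]
    (N : ℕ) (z : Fin N → Ω → ℝ) (hmeas : ∀ l, Measurable (z l))
    (hindep : iIndepFun z P)
    (hgauss : ∀ l, Measure.map (z l) P = gaussianReal 0 1)
    (ql : Fin N → ℝ) (lammax : ℝ) (hql : ∀ l, |ql l| ≤ lammax)
    (ν : ℝ) (hν0 : 0 < ν) (hν : ν < 1/2) :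
    P {ω | (∑ l, ql l * (z l ω) ^ 2) - (∑ l, ql l) ≥ (N : ℝ) * ν}
      ≤ ENNReal.ofReal (Real.exp (-((N : ℝ) * ν ^ 2) / (8 * max (lammax ^ 2) 1))) :=
  stmt_2_general P N z hindep hgauss ql lammax hql ν hν0 hν
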